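/- Let X ⊆ ℝ^n be compact and backward stable under f, with f invertible and f⁻¹, h continuous on X, A ∈ ℝ^{m×m} normal with ρ(A) < 1, B ∈ ℝ^{m×p}. Then the series T(x) = Σ_{i=0}^∞ A^i B h(f^{−(i+1)}(x)) converges uniformly on X, defines a continuous function T : X → ℝ^m, and T is the unique continuous solution of T(f(x)) = A T(x) + B h(x) on X. -/

import Mathlib

open Matrix

noncomputable def specRad {m : ℕ} (A : Matrix (Fin m) (Fin m) ℝ) : ℝ :=
  sSup ((fun z : ℂ => ‖z‖) '' spectrum ℂ (A.map Complex.ofReal))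

def mulVecE {m p : ℕ} (A : Matrix (Fin m) (Fin p) ℝ) (x : EuclideanSpace ℝ (Fin p)) :
    EuclideanSpace ℝ (Fin m) := WithLp.toLp 2 (A.mulVec x)

open scoped ENNReal NNReal

section Helpers


attribute [local instance] Matrix.linftyOpNormedRing Matrix.linftyOpNormedAlgebra

lemma entry_le_linfty {m : ℕ} (M : Matrix (Fin m) (Fin m) ℂ) (j k : Fin m) :
    ‖M j k‖ ≤ ‖M‖ := by
  have h1 : ‖M j k‖₊ ≤ ‖M‖₊ := by
    rw [Matrix.linfty_opNNNorm_def]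
    exact le_trans (Finset.single_le_sum (f := fun k' => ‖M j k'‖₊) (fun k _ => zero_le) (Finset.mem_univ k))
      (Finset.le_sup (f := fun i => ∑ j, ‖M i j‖₊) (Finset.mem_univ j))
  simpa using (NNReal.coe_le_coe.mpr h1 : (‖M j k‖₊ : ℝ) ≤ _)

lemma pow_entry_decay {m : ℕ} (A : Matrix (Fin m) (Fin m) ℝ) (hA : specRad A < 1) :
    ∃ C r : ℝ, 1 ≤ C ∧ 0 < r ∧ r < 1 ∧ ∀ (i : ℕ) (j k : Fin m), |(A ^ i) j k| ≤ C * r ^ i := by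
  rcases Nat.eq_zero_or_pos m with hm | hm
  · exact ⟨1, 1/2, le_refl 1, by norm_num, by norm_num,
      fun i j k => absurd (j.2.trans_le hm.le) (Nat.not_lt_zero _)⟩
  haveI : Nonempty (Fin m) := ⟨⟨0, hm⟩⟩
  haveI : CompleteSpace (Matrix (Fin m) (Fin m) ℂ) := FiniteDimensional.complete ℂ _
  set Ac : Matrix (Fin m) (Fin m) ℂ := A.map Complex.ofReal with hAc
  -- spectral radius < 1
  have hbdd : BddAbove ((fun z : ℂ => ‖z‖) '' spectrum ℂ Ac) := by
    refine ⟨‖Ac‖, ?_⟩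
    rintro x ⟨z, hz, rfl⟩
    simpa using spectrum.norm_le_norm_of_mem hz
  have hspec : spectralRadius ℂ Ac < 1 := by
    have hle : ∀ z ∈ spectrum ℂ Ac, (‖z‖₊ : ℝ≥0∞) ≤ ENNReal.ofReal (specRad A) := by
      intro z hz
      have h2 : ‖z‖ ≤ specRad A := le_csSup hbdd ⟨z, hz, rfl⟩
      calc (‖z‖₊ : ℝ≥0∞) = ENNReal.ofReal ‖z‖ := (ENNReal.ofReal_eq_coe_nnreal (norm_nonneg z)).symm
        _ ≤ ENNReal.ofReal (specRad A) :=
            ENNReal.ofReal_le_ofReal (by simpa using h2)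
    calc spectralRadius ℂ Ac ≤ ENNReal.ofReal (specRad A) := iSup₂_le hle
      _ < 1 := by
          rw [← ENNReal.ofReal_one]
          exact (ENNReal.ofReal_lt_ofReal_iff_of_nonneg
            (Real.sSup_nonneg (by rintro x ⟨z, _, rfl⟩; exact norm_nonneg z))).mpr hA
  -- obtain r
  obtain ⟨r, hρr, hr1⟩ := ENNReal.lt_iff_exists_nnreal_btwn.mp hspec
  have hr1' : (r : ℝ) < 1 := by exact_mod_cast hr1
  have hr0 : 0 < r := ENNReal.coe_pos.mp (lt_of_le_of_lt zero_le hρr)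
  -- Gelfand
  have hG := spectrum.pow_nnnorm_pow_one_div_tendsto_nhds_spectralRadius Ac
  have hev : ∀ᶠ i : ℕ in Filter.atTop, (‖Ac ^ i‖₊ : ℝ≥0∞) ^ (1 / (i:ℝ)) < (r : ℝ≥0∞) :=
    hG.eventually_lt_const hρr
  obtain ⟨N, hN⟩ := (hev.and (Filter.eventually_ge_atTop 1)).exists_forall_of_atTop
  have hbound : ∀ i, N ≤ i → ‖Ac ^ i‖ ≤ (r : ℝ) ^ i := by
    intro i hi
    obtain ⟨h1, h2⟩ := hN i hi
    have hi0 : (i : ℝ) ≠ 0 := Nat.cast_ne_zero.mpr (by omega)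
    have h3 : ((‖Ac ^ i‖₊ : ℝ≥0∞) ^ (1 / (i:ℝ))) ^ (i : ℝ) ≤ ((r : ℝ≥0∞)) ^ (i : ℝ) :=
      ENNReal.rpow_le_rpow h1.le (Nat.cast_nonneg i)
    rw [← ENNReal.rpow_mul, one_div, inv_mul_cancel₀ hi0, ENNReal.rpow_one,
      ENNReal.rpow_natCast] at h3
    have h4 : (‖Ac ^ i‖₊ : ℝ≥0∞) ≤ ((r ^ i : ℝ≥0) : ℝ≥0∞) := by
      rwa [ENNReal.coe_pow]
    have h5 : ‖Ac ^ i‖₊ ≤ r ^ i := by exact_mod_cast h4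
    calc ‖Ac ^ i‖ = (‖Ac ^ i‖₊ : ℝ) := rfl
      _ ≤ ((r ^ i : ℝ≥0) : ℝ) := NNReal.coe_le_coe.mpr h5
      _ = (r : ℝ) ^ i := by push_cast; ring
  -- constant for small i
  set S : ℝ := ∑ i ∈ Finset.range N, ‖Ac ^ i‖ with hS
  have hS0 : 0 ≤ S := Finset.sum_nonneg fun _ _ => norm_nonneg _
  set C : ℝ := max 1 (S / (r : ℝ) ^ N) with hC
  have hrpos : (0:ℝ) < (r:ℝ) := hr0
  refine ⟨C, r, le_max_left _ _, hrpos, hr1', ?_⟩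
  intro i j k
  have hmap : Ac ^ i = (A ^ i).map Complex.ofReal := by
    have := (map_pow (Complex.ofRealHom.mapMatrix (m := Fin m)) A i).symm
    exact this
  have hentry : |(A ^ i) j k| ≤ ‖Ac ^ i‖ := by
    have h := entry_le_linfty (Ac ^ i) j k
    have h2 : (Ac ^ i) j k = (((A ^ i) j k : ℝ) : ℂ) := by rw [hmap, Matrix.map_apply]
    rwa [h2, Complex.norm_real, Real.norm_eq_abs] at h
  rcases le_or_gt N i with hi | hi
  · calc |(A ^ i) j k| ≤ ‖Ac ^ i‖ := hentry
      _ ≤ (r:ℝ) ^ i := hbound i hi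
      _ = 1 * (r:ℝ) ^ i := (one_mul _).symm
      _ ≤ C * (r:ℝ) ^ i := by
          exact mul_le_mul_of_nonneg_right (le_max_left _ _) (by positivity)
  · have h6 : ‖Ac ^ i‖ ≤ S := Finset.single_le_sum (f := fun i => ‖Ac ^ i‖)
      (fun _ _ => norm_nonneg _) (Finset.mem_range.mpr hi)
    have h7 : (r:ℝ) ^ N ≤ (r:ℝ) ^ i := pow_le_pow_of_le_one hrpos.le hr1'.le hi.le
    calc |(A ^ i) j k| ≤ S := hentry.trans h6
      _ = (S / (r:ℝ) ^ N) * (r:ℝ) ^ N := by field_simp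
      _ ≤ C * (r:ℝ) ^ i := by
          refine mul_le_mul (le_max_right _ _) h7 (by positivity) ?_
          exact le_trans zero_le_one (le_max_left _ _)


lemma euclid_coord_le {q : ℕ} (v : EuclideanSpace ℝ (Fin q)) (k : Fin q) : |v k| ≤ ‖v‖ := by
  rw [EuclideanSpace.norm_eq]
  have h1 : |v k| = Real.sqrt (|v k| ^ 2) := by
    rw [Real.sqrt_sq_eq_abs]; exact (abs_abs _).symm
  rw [h1]
  apply Real.sqrt_le_sqrt
  rw [sq_abs]
  exact Finset.single_le_sum (f := fun i => ‖v i‖ ^ 2) (fun i _ => by positivity)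
    (Finset.mem_univ k) |>.trans_eq' (by rw [Real.norm_eq_abs, sq_abs])

lemma mulVecE_norm_le {a b : ℕ} (M : Matrix (Fin a) (Fin b) ℝ) {K : ℝ} (hK : 0 ≤ K)
    (hM : ∀ j k, |M j k| ≤ K) (v : EuclideanSpace ℝ (Fin b)) :
    ‖mulVecE M v‖ ≤ (Real.sqrt a * b) * K * ‖v‖ := by
  have hcoord : ∀ j, |mulVecE M v j| ≤ b * K * ‖v‖ := by
    intro j
    have : mulVecE M v j = ∑ k, M j k * v k := by
      simp [mulVecE, Matrix.mulVec, dotProduct]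
    rw [this]
    calc |∑ k, M j k * v k| ≤ ∑ k, |M j k * v k| := Finset.abs_sum_le_sum_abs _ _
      _ ≤ ∑ k : Fin b, K * ‖v‖ := by
          refine Finset.sum_le_sum fun k _ => ?_
          rw [abs_mul]
          exact mul_le_mul (hM j k) (euclid_coord_le v k) (abs_nonneg _)
            hK
      _ = b * K * ‖v‖ := by rw [Finset.sum_const, Finset.card_univ, Fintype.card_fin]; ring
  rw [EuclideanSpace.norm_eq]
  have h2 : ∑ j, ‖mulVecE M v j‖ ^ 2 ≤ ∑ j : Fin a, (b * K * ‖v‖) ^ 2 := by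
    refine Finset.sum_le_sum fun j _ => ?_
    rw [Real.norm_eq_abs]
    exact pow_le_pow_left₀ (abs_nonneg _) (hcoord j) 2
  calc Real.sqrt (∑ j, ‖mulVecE M v j‖ ^ 2) ≤ Real.sqrt (∑ j : Fin a, (b * K * ‖v‖) ^ 2) :=
        Real.sqrt_le_sqrt h2
    _ = Real.sqrt (a * (b * K * ‖v‖) ^ 2) := by
        rw [Finset.sum_const, Finset.card_univ, Fintype.card_fin, nsmul_eq_mul]
    _ = Real.sqrt a * (b * K * ‖v‖) := by
        rw [Real.sqrt_mul (Nat.cast_nonneg a), Real.sqrt_sq (by positivity)]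
    _ = (Real.sqrt a * b) * K * ‖v‖ := by ring

noncomputable def mulVecCLM {a b : ℕ} (M : Matrix (Fin a) (Fin b) ℝ) :
    EuclideanSpace ℝ (Fin b) →L[ℝ] EuclideanSpace ℝ (Fin a) :=
  LinearMap.toContinuousLinearMap
    { toFun := mulVecE M
      map_add' := fun x y => by
        simp [mulVecE, Matrix.mulVec_add]
      map_smul' := fun c x => by
        simp [mulVecE, Matrix.mulVec_smul] }

lemma mulVecCLM_apply {a b : ℕ} (M : Matrix (Fin a) (Fin b) ℝ) (v : EuclideanSpace ℝ (Fin b)) :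
    mulVecCLM M v = mulVecE M v := rfl

lemma continuous_mulVecE {a b : ℕ} (M : Matrix (Fin a) (Fin b) ℝ) :
    Continuous (mulVecE M) := (mulVecCLM M).continuous

lemma mulVecE_mulVecE {a b c : ℕ} (M : Matrix (Fin a) (Fin b) ℝ) (N : Matrix (Fin b) (Fin c) ℝ)
    (v : EuclideanSpace ℝ (Fin c)) : mulVecE M (mulVecE N v) = mulVecE (M * N) v :=
  congrArg (WithLp.toLp 2) (Matrix.mulVec_mulVec v M N)

lemma mulVecE_one {a : ℕ} (v : EuclideanSpace ℝ (Fin a)) : mulVecE 1 v = v :=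
  congrArg (WithLp.toLp 2) (Matrix.one_mulVec v)

lemma mulVecE_sub {a b : ℕ} (M : Matrix (Fin a) (Fin b) ℝ) (v w : EuclideanSpace ℝ (Fin b)) :
    mulVecE M (v - w) = mulVecE M v - mulVecE M w :=
  by simp [mulVecE, Matrix.mulVec_sub]

end Helpers

/-- on a compact backward stable set, the Luenberger series converges
uniformly, defines a continuous function satisfying the functional equation, and it is
the unique continuous solution. -/
theorem stmt6 {n m p : ℕ}
    (X : Set (EuclideanSpace ℝ (Fin n))) (hX : IsCompact X)
    (f finv : EuclideanSpace ℝ (Fin n) → EuclideanSpace ℝ (Fin n))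
    (hbij : Function.LeftInverse finv f ∧ Function.RightInverse finv f)
    (hfinv : Continuous finv)
    (hback : Set.MapsTo finv X X)
    (h : EuclideanSpace ℝ (Fin n) → EuclideanSpace ℝ (Fin p)) (hh : Continuous h)
    (A : Matrix (Fin m) (Fin m) ℝ) (hnormal : A * Aᵀ = Aᵀ * A) (hA : specRad A < 1)
    (B : Matrix (Fin m) (Fin p) ℝ)
    (T : EuclideanSpace ℝ (Fin n) → EuclideanSpace ℝ (Fin m))
    (hTdef : ∀ x, T x = ∑' i : ℕ, mulVecE (A ^ i * B) (h (finv^[i + 1] x))) :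
    (∀ x ∈ X, Summable (fun i : ℕ => mulVecE (A ^ i * B) (h (finv^[i + 1] x)))) ∧
      TendstoUniformlyOn
        (fun N x => ∑ i ∈ Finset.range N, mulVecE (A ^ i * B) (h (finv^[i + 1] x)))
        T Filter.atTop X ∧
      ContinuousOn T X ∧
      (∀ x ∈ X, T (f x) = mulVecE A (T x) + mulVecE B (h x)) ∧
      (∀ T' : EuclideanSpace ℝ (Fin n) → EuclideanSpace ℝ (Fin m),
        ContinuousOn T' X →
        (∀ x ∈ X, T' (f x) = mulVecE A (T' x) + mulVecE B (h x)) →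
        ∀ x ∈ X, T' x = T x) := by
  obtain ⟨C, r, hC1, hr0, hr1, hpow⟩ := pow_entry_decay A hA
  have hC0 : (0:ℝ) ≤ C := zero_le_one.trans hC1
  -- bound on h over X
  obtain ⟨Mh, hMh⟩ := hX.exists_bound_of_continuousOn hh.continuousOn
  set Mh' : ℝ := max Mh 0 with hMh'def
  have hMh'0 : 0 ≤ Mh' := le_max_right _ _
  have hMh' : ∀ y ∈ X, ‖h y‖ ≤ Mh' := fun y hy => (hMh y hy).trans (le_max_left _ _)
  -- entry bound for B
  set KB : ℝ := ∑ l : Fin m, ∑ k : Fin p, |B l k| with hKBdef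
  have hKB0 : 0 ≤ KB := Finset.sum_nonneg fun _ _ => Finset.sum_nonneg fun _ _ => abs_nonneg _
  have hABentry : ∀ (i : ℕ) (j : Fin m) (k : Fin p), |(A ^ i * B) j k| ≤ C * KB * r ^ i := by
    intro i j k
    have h1 : (A ^ i * B) j k = ∑ l, (A ^ i) j l * B l k := by
      simp [Matrix.mul_apply]
    rw [h1]
    calc |∑ l, (A ^ i) j l * B l k| ≤ ∑ l, |(A ^ i) j l * B l k| :=
          Finset.abs_sum_le_sum_abs _ _
      _ ≤ ∑ l, (C * r ^ i) * |B l k| := by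
          refine Finset.sum_le_sum fun l _ => ?_
          rw [abs_mul]
          exact mul_le_mul_of_nonneg_right (hpow i j l) (abs_nonneg _)
      _ = (C * r ^ i) * ∑ l, |B l k| := by rw [Finset.mul_sum]
      _ ≤ (C * r ^ i) * KB := by
          refine mul_le_mul_of_nonneg_left ?_ (by positivity)
          exact Finset.sum_le_sum fun l _ => Finset.single_le_sum
            (f := fun k' => |B l k'|) (fun _ _ => abs_nonneg _) (Finset.mem_univ k)
      _ = C * KB * r ^ i := by ring
  -- master bound
  set D : ℝ := (Real.sqrt m * p) * (C * KB) * Mh' with hDdef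
  have hD0 : 0 ≤ D := by positivity
  have hterm : ∀ (i : ℕ) (y : EuclideanSpace ℝ (Fin n)), y ∈ X →
      ‖mulVecE (A ^ i * B) (h y)‖ ≤ D * r ^ i := by
    intro i y hy
    have h1 := mulVecE_norm_le (A ^ i * B) (K := C * KB * r ^ i) (by positivity)
      (fun j k => hABentry i j k) (h y)
    calc ‖mulVecE (A ^ i * B) (h y)‖ ≤ (Real.sqrt m * p) * (C * KB * r ^ i) * ‖h y‖ := h1
      _ ≤ (Real.sqrt m * p) * (C * KB * r ^ i) * Mh' := by
          refine mul_le_mul_of_nonneg_left (hMh' y hy) (by positivity)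
      _ = D * r ^ i := by rw [hDdef]; ring
  have hu : Summable (fun i : ℕ => D * r ^ i) :=
    (summable_geometric_of_lt_one hr0.le hr1).mul_left D
  have hmem : ∀ (x : EuclideanSpace ℝ (Fin n)), x ∈ X → ∀ i : ℕ, finv^[i] x ∈ X :=
    fun x hx i => Set.MapsTo.iterate hback i hx
  -- Part 1 : summability
  have part1 : ∀ x ∈ X, Summable (fun i : ℕ => mulVecE (A ^ i * B) (h (finv^[i + 1] x))) := by
    intro x hx
    exact Summable.of_norm_bounded hu fun i => hterm i _ (hmem x hx (i + 1))
  -- Part 2 : uniform convergence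
  have part2 : TendstoUniformlyOn
      (fun N x => ∑ i ∈ Finset.range N, mulVecE (A ^ i * B) (h (finv^[i + 1] x)))
      T Filter.atTop X := by
    have h2 := tendstoUniformlyOn_tsum_nat (f := fun i x => mulVecE (A ^ i * B) (h (finv^[i+1] x)))
      hu (fun i x hx => hterm i _ (hmem x hx (i + 1)))
    have heq : (fun x => ∑' i : ℕ, mulVecE (A ^ i * B) (h (finv^[i + 1] x))) = T :=
      funext fun x => (hTdef x).symm
    rwa [heq] at h2
  -- Part 3 : continuity
  have hgcont : ∀ N : ℕ, Continuous
      (fun x => ∑ i ∈ Finset.range N, mulVecE (A ^ i * B) (h (finv^[i + 1] x))) := by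
    intro N
    refine continuous_finset_sum _ fun i _ => ?_
    exact (continuous_mulVecE _).comp (hh.comp (hfinv.iterate (i + 1)))
  have part3 : ContinuousOn T X :=
    part2.continuousOn (Filter.Eventually.of_forall fun N => (hgcont N).continuousOn).frequently
  -- Part 4 : functional equation
  have part4 : ∀ x ∈ X, T (f x) = mulVecE A (T x) + mulVecE B (h x) := by
    intro x hx
    have hiter : ∀ i : ℕ, finv^[i + 1] (f x) = finv^[i] x := by
      intro i
      rw [Function.iterate_succ_apply, hbij.1 x]
    have hsum' : Summable (fun i : ℕ => mulVecE (A ^ i * B) (h (finv^[i] x))) :=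
      Summable.of_norm_bounded hu fun i => hterm i _ (hmem x hx i)
    have hTf : T (f x) = ∑' i : ℕ, mulVecE (A ^ i * B) (h (finv^[i] x)) := by
      rw [hTdef]
      exact tsum_congr fun i => by rw [hiter i]
    rw [hTf, Summable.tsum_eq_zero_add hsum']
    have h0 : mulVecE (A ^ 0 * B) (h (finv^[0] x)) = mulVecE B (h x) := by
      simp [pow_zero, one_mul]
    have hsucc : ∀ i : ℕ, mulVecE (A ^ (i + 1) * B) (h (finv^[i + 1] x)) =
        mulVecE A (mulVecE (A ^ i * B) (h (finv^[i + 1] x))) := by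
      intro i
      have hA' : A ^ (i + 1) * B = A * (A ^ i * B) := by rw [pow_succ', Matrix.mul_assoc]
      rw [hA', ← mulVecE_mulVecE]
    have htail : ∑' i : ℕ, mulVecE (A ^ (i + 1) * B) (h (finv^[i + 1] x)) = mulVecE A (T x) := by
      rw [hTdef x]
      calc ∑' i : ℕ, mulVecE (A ^ (i + 1) * B) (h (finv^[i + 1] x))
          = ∑' i : ℕ, mulVecCLM A (mulVecE (A ^ i * B) (h (finv^[i + 1] x))) :=
            tsum_congr fun i => by rw [hsucc i, mulVecCLM_apply]
        _ = mulVecCLM A (∑' i : ℕ, mulVecE (A ^ i * B) (h (finv^[i + 1] x))) :=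
            ((mulVecCLM A).map_tsum (part1 x hx)).symm
        _ = mulVecE A (∑' i : ℕ, mulVecE (A ^ i * B) (h (finv^[i + 1] x))) := rfl
    rw [h0, htail, add_comm]
  refine ⟨part1, part2, part3, part4, ?_⟩
  -- Part 5 : uniqueness
  intro T' hT'c hT'eq x hx
  set E : EuclideanSpace ℝ (Fin n) → EuclideanSpace ℝ (Fin m) := fun y => T' y - T y with hEdef
  have hEstep : ∀ y ∈ X, E y = mulVecE A (E (finv y)) := by
    intro y hy
    have h1 := hT'eq (finv y) (hback hy)
    have h2 := part4 (finv y) (hback hy)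
    rw [hbij.2 y] at h1 h2
    rw [hEdef]
    simp only
    rw [h1, h2, mulVecE_sub]
    abel
  have hEiter : ∀ i : ℕ, E x = mulVecE (A ^ i) (E (finv^[i] x)) := by
    intro i
    induction i with
    | zero => simp [pow_zero, mulVecE_one]
    | succ i ih =>
      rw [ih, hEstep _ (hmem x hx i), ← Function.iterate_succ_apply' finv i x,
        mulVecE_mulVecE, ← pow_succ]
  -- bound on E over X
  obtain ⟨K, hK⟩ := hX.exists_bound_of_continuousOn (hT'c.sub part3)
  set K' : ℝ := max K 0 with hK'def
  have hK'0 : 0 ≤ K' := le_max_right _ _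
  have hKE : ∀ y ∈ X, ‖E y‖ ≤ K' := fun y hy => (hK y hy).trans (le_max_left _ _)
  have hbound : ∀ i : ℕ, ‖E x‖ ≤ ((Real.sqrt m * m) * C * K') * r ^ i := by
    intro i
    rw [hEiter i]
    have h1 := mulVecE_norm_le (A ^ i) (K := C * r ^ i) (by positivity)
      (fun j k => hpow i j k) (E (finv^[i] x))
    calc ‖mulVecE (A ^ i) (E (finv^[i] x))‖
        ≤ (Real.sqrt m * m) * (C * r ^ i) * ‖E (finv^[i] x)‖ := h1
      _ ≤ (Real.sqrt m * m) * (C * r ^ i) * K' :=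
          mul_le_mul_of_nonneg_left (hKE _ (hmem x hx i)) (by positivity)
      _ = ((Real.sqrt m * m) * C * K') * r ^ i := by ring
  have htend : Filter.Tendsto (fun i : ℕ => ((Real.sqrt m * m) * C * K') * r ^ i)
      Filter.atTop (nhds 0) := by
    have := tendsto_pow_atTop_nhds_zero_of_lt_one hr0.le hr1
    simpa using this.const_mul ((Real.sqrt m * m) * C * K')
  have hE0 : ‖E x‖ ≤ 0 := ge_of_tendsto' htend hbound
  have : E x = 0 := norm_le_zero_iff.mp hE0
  exact sub_eq_zero.mp this
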